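/- arXiv:2410.10035 — 3 statements merged into one kernel-verified Lean document; each statement's English description precedes it below -/
import Mathlib

section
/- For every real number x with 1 ≤ x, the Gamma function satisfies √(2πx) · x^x · e^{-x} < Γ(x + 1). -/
open Real Filter Topology Finset
open scoped Nat

/-!
`stirlingGap x` is the logarithm of `Γ(x+1) / (√x x^x e^{-x})`. The functional equation of `Γ`
gives `stirlingGap x - stirlingGap (x + 1) = (x + 1/2) log (1 + 1/x) - 1`, which is positive
because the series of `log (1 + 1/x)` in odd powers of `1/(2x+1)` begins with `2/(2x+1)`.
Hence `n ↦ stirlingGap (x + n)` is strictly decreasing. Euler's limit formula for `Γ` and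
Stirling's formula for `n!` show that it tends to `log √(2π)`, so `stirlingGap x > log √(2π)`.
-/

noncomputable def stirlingGap (x : ℝ) : ℝ :=
  log (Gamma (x + 1)) - (x + 1 / 2) * log x + x

theorem one_lt_add_half_mul_log_one_add_inv {x : ℝ} (hx : 0 < x) :
    1 < (x + 1 / 2) * log (1 + x⁻¹) := by
  have hle := sum_le_hasSum (range 2) (fun k _ ↦ by positivity) (hasSum_log_one_add_inv hx)
  norm_num [sum_range_succ] at hle
  have h2x : 0 < 2 * x + 1 := by positivity
  calc 1 = (x + 1 / 2) * (2 * (2 * x + 1)⁻¹) := by field_simp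
    _ < (x + 1 / 2) * (2 * (2 * x + 1)⁻¹ + 2 / 3 * ((2 * x + 1) ^ 3)⁻¹) := by
      gcongr
      exact lt_add_of_pos_right _ (by positivity)
    _ ≤ (x + 1 / 2) * log (1 + x⁻¹) := by gcongr

theorem stirlingGap_add_one_lt {x : ℝ} (hx : 0 < x) : stirlingGap (x + 1) < stirlingGap x := by
  have hlog : log (1 + x⁻¹) = log (x + 1) - log x := by
    rw [← log_div (by positivity) hx.ne']
    congr 1
    field_simp
  have hGamma : log (Gamma (x + 1 + 1)) = log (x + 1) + log (Gamma (x + 1)) := by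
    rw [Gamma_add_one (by positivity),
      log_mul (by positivity) (Gamma_pos_of_pos (by positivity)).ne']
  have := one_lt_add_half_mul_log_one_add_inv hx
  rw [hlog] at this
  simp only [stirlingGap, hGamma]
  linarith

theorem prod_range_add_mul_Gamma {x : ℝ} (hx : 0 < x) (n : ℕ) :
    (∏ j ∈ range n, (x + j)) * Gamma x = Gamma (x + n) := by
  induction n with
  | zero => simp
  | succ n ih =>
    rw [prod_range_succ, mul_right_comm, ih, Nat.cast_succ, ← add_assoc,
      Gamma_add_one (by positivity), mul_comm]

theorem GammaSeq_eq_div_Gamma {x : ℝ} (hx : 0 < x) (n : ℕ) :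
    GammaSeq x n = n ^ x * n ! * Gamma x / Gamma (x + n + 1) := by
  rw [GammaSeq, show x + n + 1 = x + (n + 1 : ℕ) by push_cast; ring,
    ← prod_range_add_mul_Gamma hx, mul_div_mul_right _ _ (Gamma_pos_of_pos hx).ne']

theorem tendsto_log_Gamma_add_natCast_sub_log_factorial {x : ℝ} (hx : 0 < x) :
    Tendsto (fun n : ℕ ↦ log (Gamma (x + n + 1)) - log n ! - x * log n) atTop (𝓝 0) := by
  have hGamma := Gamma_pos_of_pos hx
  have hlim := ((continuousAt_log hGamma.ne').tendsto.comp (GammaSeq_tendsto_Gamma x)).const_sub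
    (log (Gamma x))
  rw [sub_self] at hlim
  refine hlim.congr' ?_
  filter_upwards [eventually_ne_atTop 0] with n hn
  have hn' : (0 : ℝ) < n := by positivity
  rw [Function.comp_apply, GammaSeq_eq_div_Gamma hx, log_div (by positivity)
    (Gamma_pos_of_pos (by positivity)).ne', log_mul (by positivity) hGamma.ne',
    log_mul (by positivity) (by positivity), log_rpow hn']
  ring

theorem tendsto_add_add_half_mul_log_one_add_div (x : ℝ) :
    Tendsto (fun y ↦ (x + y + 1 / 2) * log (1 + x / y)) atTop (𝓝 x) := by
  have hlog : Tendsto (fun y ↦ log (1 + x / y)) atTop (𝓝 0) := by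
    have hdiv : Tendsto (fun y : ℝ ↦ x / y) atTop (𝓝 0) :=
      tendsto_const_nhds.div_atTop tendsto_id
    have hone : Tendsto (fun y : ℝ ↦ 1 + x / y) atTop (𝓝 1) := by
      simpa using hdiv.const_add 1
    simpa [Function.comp_def] using (continuousAt_log one_ne_zero).tendsto.comp hone
  have hsum := (tendsto_mul_log_one_add_div_atTop x).add (hlog.const_mul (x + 1 / 2))
  rw [mul_zero, add_zero] at hsum
  refine hsum.congr fun y ↦ ?_
  ring

theorem stirlingGap_natCast {n : ℕ} (hn : n ≠ 0) :
    stirlingGap n = log (Stirling.stirlingSeq n) + log 2 / 2 := by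
  have hn' : (0 : ℝ) < n := by positivity
  rw [stirlingGap, Gamma_nat_eq_factorial, Stirling.log_stirlingSeq_formula,
    log_mul two_ne_zero hn'.ne', log_div hn'.ne' (exp_pos 1).ne', log_exp]
  ring

theorem tendsto_stirlingGap_natCast :
    Tendsto (fun n : ℕ ↦ stirlingGap n) atTop (𝓝 (log (2 * π) / 2)) := by
  have hlim := ((continuousAt_log (by positivity : √π ≠ 0)).tendsto.comp
    Stirling.tendsto_stirlingSeq_sqrt_pi).add_const (log 2 / 2)
  rw [log_sqrt pi_pos.le, ← add_div, add_comm, ← log_mul two_ne_zero pi_pos.ne'] at hlim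
  refine hlim.congr' ?_
  filter_upwards [eventually_ne_atTop 0] with n hn
  rw [stirlingGap_natCast hn, Function.comp_apply]

theorem tendsto_stirlingGap_add_natCast_sub {x : ℝ} (hx : 0 < x) :
    Tendsto (fun n : ℕ ↦ stirlingGap (x + n) - stirlingGap n) atTop (𝓝 0) := by
  have hlim := (tendsto_log_Gamma_add_natCast_sub_log_factorial hx).sub
    (((tendsto_add_add_half_mul_log_one_add_div x).comp tendsto_natCast_atTop_atTop).sub_const x)
  rw [sub_self, sub_zero] at hlim
  refine hlim.congr' ?_
  filter_upwards [eventually_ne_atTop 0] with n hn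
  have hn' : (0 : ℝ) < n := by positivity
  have hlog : log (1 + x / n) = log (x + n) - log n := by
    rw [← log_div (by positivity) hn'.ne']
    congr 1
    field_simp
    ring
  simp only [Function.comp_apply, hlog, stirlingGap, Gamma_nat_eq_factorial]
  ring

theorem tendsto_stirlingGap_add_natCast {x : ℝ} (hx : 0 < x) :
    Tendsto (fun n : ℕ ↦ stirlingGap (x + n)) atTop (𝓝 (log (2 * π) / 2)) := by
  simpa using (tendsto_stirlingGap_add_natCast_sub hx).add tendsto_stirlingGap_natCast

theorem log_two_pi_div_two_lt_stirlingGap {x : ℝ} (hx : 0 < x) :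
    log (2 * π) / 2 < stirlingGap x := by
  have hanti : StrictAnti fun n : ℕ ↦ stirlingGap (x + n) :=
    strictAnti_nat_of_succ_lt fun n ↦ by
      simpa [add_assoc] using stirlingGap_add_one_lt (x := x + n) (by positivity)
  simpa using ((hanti.antitone.le_of_tendsto (tendsto_stirlingGap_add_natCast hx) 1).trans_lt
    (hanti zero_lt_one))

theorem stirlingGap_eq_log_div {x : ℝ} (hx : 0 < x) :
    stirlingGap x = log (Gamma (x + 1) / (√x * x ^ x * exp (-x))) := by
  rw [log_div (Gamma_pos_of_pos (by positivity)).ne' (by positivity),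
    log_mul (by positivity) (by positivity), log_mul (by positivity) (by positivity), log_exp,
    log_sqrt hx.le, log_rpow hx, stirlingGap]
  ring

/-- Lower Stirling bound for the Gamma function:
`√(2πx) · x^x · e^{-x} < Γ(x+1)` for all real `x ≥ 1`. -/
theorem sqrt_two_pi_mul_rpow_mul_exp_lt_Gamma (x : ℝ) (hx : 1 ≤ x) :
    Real.sqrt (2 * π * x) * x ^ x * Real.exp (-x) < Real.Gamma (x + 1) := by
  have hx0 : 0 < x := zero_lt_one.trans_le hx
  have hgap := log_two_pi_div_two_lt_stirlingGap hx0
  rw [stirlingGap_eq_log_div hx0, ← log_sqrt (by positivity),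
    log_lt_log_iff (by positivity) (div_pos (Gamma_pos_of_pos (by positivity)) (by positivity)),
    lt_div_iff₀ (by positivity)] at hgap
  calc √(2 * π * x) * x ^ x * exp (-x) = √(2 * π) * (√x * x ^ x * exp (-x)) := by
        rw [sqrt_mul (by positivity)]; ring
    _ < Gamma (x + 1) := hgap
end

section
/- If n divides k, then the central multinomial probability satisfies (1/n^k) · k!/((k/n)!)^n < 2 · (1/√(2π))^{n-1} · n^{n/2} / k^{(n-1)/2}, provided k is sufficiently large (in terms of absolute constants coming from Stirling's bounds). -/
open Real

lemma sqrt_pi_le_stirlingSeq {m : ℕ} (hm : 1 ≤ m) :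
    Real.sqrt π ≤ Stirling.stirlingSeq m := by
  obtain ⟨j, rfl⟩ := Nat.exists_eq_add_of_le hm
  have ht : Filter.Tendsto (Stirling.stirlingSeq ∘ Nat.succ) Filter.atTop (nhds (Real.sqrt π)) :=
    (Filter.tendsto_add_atTop_iff_nat 1).mpr Stirling.tendsto_stirlingSeq_sqrt_pi
  have := Stirling.stirlingSeq'_antitone.le_of_tendsto ht j
  simpa [Nat.add_comm, Function.comp, Nat.succ_eq_add_one] using this

lemma stirlingSeq_le {k : ℕ} (hk : 1 ≤ k) :
    Stirling.stirlingSeq k ≤ Real.exp 1 / Real.sqrt 2 := by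
  obtain ⟨j, rfl⟩ := Nat.exists_eq_add_of_le hk
  have := Stirling.stirlingSeq'_antitone (Nat.zero_le j)
  simpa [Nat.add_comm, Function.comp, Nat.succ_eq_add_one, Stirling.stirlingSeq_one] using this

lemma factorial_eq_stirling (k : ℕ) (hk : 1 ≤ k) :
    (k.factorial : ℝ) =
      Stirling.stirlingSeq k * (Real.sqrt (2 * k) * ((k : ℝ) / Real.exp 1) ^ k) := by
  have hk' : (0:ℝ) < (k:ℝ) := by exact_mod_cast hk
  have hpos : 0 < Real.sqrt (2 * k) * ((k : ℝ) / Real.exp 1) ^ k := by positivity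
  rw [Stirling.stirlingSeq, div_mul_cancel₀ _ (ne_of_gt hpos)]

lemma factorial_upper (k : ℕ) (hk : 1 ≤ k) :
    (k.factorial : ℝ) ≤
      Real.exp 1 / Real.sqrt 2 * (Real.sqrt (2 * k) * ((k : ℝ) / Real.exp 1) ^ k) := by
  rw [factorial_eq_stirling k hk]
  have hk' : (0:ℝ) < (k:ℝ) := by exact_mod_cast hk
  have hpos : 0 ≤ Real.sqrt (2 * k) * ((k : ℝ) / Real.exp 1) ^ k := by positivity
  exact mul_le_mul_of_nonneg_right (stirlingSeq_le hk) hpos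

lemma factorial_lower (m : ℕ) (hm : 1 ≤ m) :
    Real.sqrt π * (Real.sqrt (2 * m) * ((m : ℝ) / Real.exp 1) ^ m) ≤ (m.factorial : ℝ) := by
  rw [factorial_eq_stirling m hm]
  have hm' : (0:ℝ) < (m:ℝ) := by exact_mod_cast hm
  have hpos : 0 ≤ Real.sqrt (2 * m) * ((m : ℝ) / Real.exp 1) ^ m := by positivity
  exact mul_le_mul_of_nonneg_right (sqrt_pi_le_stirlingSeq hm) hpos

/-- For `n ∣ k` and `k` sufficiently large, the central multinomial probability
satisfies `(1/n^k) · k!/((k/n)!)^n < 2 · (1/√(2π))^{n-1} · n^{n/2} / k^{(n-1)/2}`. -/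
theorem central_multinomial_weight_bound :
    ∃ K : ℕ, ∀ k n : ℕ, K ≤ k → 1 ≤ n → n ∣ k →
      (1 / (n : ℝ) ^ k) * ((k.factorial : ℝ) / ((k / n).factorial : ℝ) ^ n) <
        2 * (1 / Real.sqrt (2 * π)) ^ (n - 1) * (n : ℝ) ^ ((n : ℝ) / 2) /
          (k : ℝ) ^ (((n : ℝ) - 1) / 2) := by
  refine ⟨1, fun k n hk hn hdvd => ?_⟩
  obtain ⟨m, rfl⟩ := hdvd
  have hn0 : n ≠ 0 := by omega
  have hm : 1 ≤ m := Nat.pos_of_ne_zero (by rintro rfl; simp at hk)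
  rw [Nat.mul_div_cancel_left m (by omega)]
  have hN : (1:ℝ) ≤ (n:ℝ) := by exact_mod_cast hn
  have hM : (1:ℝ) ≤ (m:ℝ) := by exact_mod_cast hm
  have hNpos : (0:ℝ) < (n:ℝ) := by linarith
  have hMpos : (0:ℝ) < (m:ℝ) := by linarith
  have hKpos : (0:ℝ) < ((n*m : ℕ):ℝ) := by push_cast; positivity
  set e : ℝ := Real.exp 1 with he
  have hepos : (0:ℝ) < e := Real.exp_pos 1
  set A : ℝ := e / Real.sqrt 2 * (Real.sqrt (2 * (n*m : ℕ)) * (((n*m : ℕ) : ℝ) / e) ^ (n*m))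
    with hA
  set B : ℝ := Real.sqrt π * (Real.sqrt (2 * m) * ((m : ℝ) / e) ^ m) with hB
  have hApos : 0 < A := by rw [hA]; positivity
  have hBpos : 0 < B := by rw [hB]; positivity
  have hfu : ((n*m).factorial : ℝ) ≤ A := factorial_upper (n*m) hk
  have hfl : B ≤ (m.factorial : ℝ) := factorial_lower m hm
  have hstep : (1 / (n : ℝ) ^ (n*m)) * (((n*m).factorial : ℝ) / (m.factorial : ℝ) ^ n) ≤
      (1 / (n : ℝ) ^ (n*m)) * (A / B ^ n) := by
    gcongr
  refine lt_of_le_of_lt hstep ?_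
  -- now prove the bound for the Stirling-approximated expression, via logarithms
  have hUpos : 0 < (1 / (n : ℝ) ^ (n*m)) * (A / B ^ n) := by positivity
  have hRpos : 0 < 2 * (1 / Real.sqrt (2 * π)) ^ (n - 1) * (n : ℝ) ^ ((n : ℝ) / 2) /
      ((n*m : ℕ) : ℝ) ^ (((n : ℝ) - 1) / 2) := by
    apply div_pos
    · apply mul_pos
      · apply mul_pos two_pos
        apply pow_pos
        rw [one_div]
        exact inv_pos.mpr (Real.sqrt_pos.mpr (by positivity))
      · exact Real.rpow_pos_of_pos hNpos _
    · exact Real.rpow_pos_of_pos hKpos _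
  rw [← Real.exp_log hUpos, ← Real.exp_log hRpos]
  apply Real.exp_lt_exp.mpr
  -- compute both logarithms
  have hlog2 : (0.6931471803 : ℝ) < Real.log 2 := Real.log_two_gt_d9
  have hlogpi : 1 < Real.log π := by
    rw [← Real.log_exp 1]
    apply Real.log_lt_log (Real.exp_pos 1)
    calc Real.exp 1 < 2.7182818286 := Real.exp_one_lt_d9
      _ < 3.141592 := by norm_num
      _ < π := Real.pi_gt_d6
  have hsqrt2 : Real.log (Real.sqrt 2) = Real.log 2 / 2 := Real.log_sqrt (by norm_num)
  have hsqrtpi : Real.log (Real.sqrt π) = Real.log π / 2 := Real.log_sqrt Real.pi_pos.le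
  have hlogK : Real.log ((n*m : ℕ) : ℝ) = Real.log n + Real.log m := by
    push_cast
    exact Real.log_mul (ne_of_gt hNpos) (ne_of_gt hMpos)
  have hlogU : Real.log ((1 / (n : ℝ) ^ (n*m)) * (A / B ^ n)) =
      1 + (Real.log n + Real.log m) / 2
        - (n : ℝ) / 2 * (Real.log π + Real.log 2 + Real.log m) := by
    rw [Real.log_mul (by positivity) (by positivity), Real.log_div (ne_of_gt hApos)
      (ne_of_gt (pow_pos hBpos n)), one_div, Real.log_inv, Real.log_pow, Real.log_pow, hA, hB,
      Real.log_mul (by positivity) (by positivity),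
      Real.log_mul (by positivity) (by positivity),
      Real.log_mul (by positivity) (by positivity),
      Real.log_mul (by positivity) (by positivity),
      Real.log_div (ne_of_gt hepos) (by positivity),
      Real.log_pow, Real.log_pow,
      Real.log_div (ne_of_gt hKpos) (ne_of_gt hepos),
      Real.log_div (ne_of_gt hMpos) (ne_of_gt hepos),
      hsqrt2, hsqrtpi,
      Real.log_sqrt (show (0:ℝ) ≤ 2 * ((n*m : ℕ):ℝ) by positivity),
      Real.log_sqrt (show (0:ℝ) ≤ 2 * (m:ℝ) by positivity),
      Real.log_mul (by norm_num : (2:ℝ) ≠ 0) (ne_of_gt hKpos),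
      Real.log_mul (by norm_num : (2:ℝ) ≠ 0) (ne_of_gt hMpos),
      he, Real.log_exp, hlogK]
    push_cast
    ring
  have hlogR : Real.log (2 * (1 / Real.sqrt (2 * π)) ^ (n - 1) * (n : ℝ) ^ ((n : ℝ) / 2) /
      ((n*m : ℕ) : ℝ) ^ (((n : ℝ) - 1) / 2)) =
      Real.log 2 - ((n : ℝ) - 1) / 2 * (Real.log 2 + Real.log π)
        + (n : ℝ) / 2 * Real.log n - ((n : ℝ) - 1) / 2 * (Real.log n + Real.log m) := by
    have hs2pi : (0:ℝ) < Real.sqrt (2 * π) := Real.sqrt_pos.mpr (by positivity)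
    rw [Real.log_div (by positivity) (ne_of_gt (Real.rpow_pos_of_pos hKpos _)),
      Real.log_mul (by positivity) (ne_of_gt (Real.rpow_pos_of_pos hNpos _)),
      Real.log_mul (by norm_num) (by positivity),
      Real.log_pow, Real.log_rpow hNpos, Real.log_rpow hKpos,
      one_div, Real.log_inv, Real.log_sqrt (by positivity),
      Real.log_mul (by norm_num) (ne_of_gt Real.pi_pos), hlogK]
    have hcast : ((n - 1 : ℕ) : ℝ) = (n : ℝ) - 1 := by
      push_cast [Nat.cast_sub hn]; ring
    rw [hcast]
    ring
  rw [hlogU, hlogR]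
  nlinarith [hlog2, hlogpi]
end

section
/- Define C_l = Σ_{j=1}^l (6 + j) for l ≥ 0 (so C_0 = 0, C_1 = 7, C_2 = 15, ...). Let B_l be the maximum of ∏_{i=1}^I n_i over all strictly increasing sequences of integers 7 ≤ n_1 < n_2 < ... < n_I with Σ n_i ≤ m, taken uniformly over m with C_l < m ≤ C_{l+1}. Then for all l ≥ 1, B_l ≤ 2^l · ∏_{j=1}^{l+1} (6 + j). -/
open Finset

/-!
Induct on the set of the `n_i` by removing its largest element `t`, with `a = 7` below. If
`t ≤ a + l`, every element lies in `[a, a + l]` and the product is at most `a ⋯ (a + l)`.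
Otherwise the remaining elements sum to less than `a + ⋯ + (a + l - 1)`, so their sum lies
between two consecutive partial sums `a + ⋯ + (a + k - 1)` and `a + ⋯ + (a + k)` with `k < l`.
The induction hypothesis bounds their product by `2 ^ k · a ⋯ (a + k)`, while
`t ≤ (a + k) + ⋯ + (a + l)`, and a sum of `d + 2` consecutive integers is at most `2 ^ (d + 1)`
times the product of all but the smallest of them.
-/

theorem exists_apply_le_lt_apply_succ {α : Type*} [LinearOrder α] {g : ℕ → α} {x : α} {n : ℕ}
    (h0 : g 0 ≤ x) (hn : x < g n) : ∃ k < n, g k ≤ x ∧ x < g (k + 1) := by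
  induction n with
  | zero => exact absurd hn h0.not_gt
  | succ n ih =>
    by_cases h : x < g n
    · obtain ⟨k, hk, hgk⟩ := ih h
      exact ⟨k, by omega, hgk⟩
    · exact ⟨n, n.lt_succ_self, not_lt.1 h, hn⟩

theorem Nat.prod_Icc_mul_prod_Ioc {M : Type*} [CommMonoid M] (f : ℕ → M) {a b c : ℕ}
    (hab : a ≤ b + 1) (hbc : b ≤ c) :
    (∏ i ∈ Icc a b, f i) * ∏ i ∈ Ioc b c, f i = ∏ i ∈ Icc a c, f i := by
  rw [← Ico_add_one_right_eq_Icc, ← Ico_add_one_add_one_eq_Ioc,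
    prod_Ico_consecutive _ hab (by omega), Ico_add_one_right_eq_Icc]

theorem Nat.sum_Ico_add_sum_Icc {M : Type*} [AddCommMonoid M] (f : ℕ → M) {a b c : ℕ}
    (hab : a ≤ b) (hbc : b ≤ c + 1) :
    ∑ i ∈ Ico a b, f i + ∑ i ∈ Icc b c, f i = ∑ i ∈ Icc a c, f i := by
  rw [← Ico_add_one_right_eq_Icc, ← Ico_add_one_right_eq_Icc, sum_Ico_consecutive _ hab hbc]

theorem Nat.sum_Icc_id_le_two_pow_mul_prod_Ioc (c d : ℕ) :
    ∑ x ∈ Icc c (c + (d + 1)), x ≤ 2 ^ (d + 1) * ∏ x ∈ Ioc c (c + (d + 1)), x := by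
  induction d with
  | zero => simp [sum_Icc_succ_top]; omega
  | succ d ih =>
    rw [← add_assoc c, sum_Icc_succ_top (by omega), prod_Ioc_succ_top (by omega), pow_succ]
    have hprod : 1 ≤ ∏ x ∈ Ioc c (c + (d + 1)), x :=
      one_le_prod' fun x hx => by simp only [mem_Ioc] at hx; omega
    have hpow : 1 ≤ 2 ^ (d + 1) := Nat.one_le_two_pow
    nlinarith [Nat.mul_le_mul hpow hprod]

theorem Nat.prod_le_prod_Icc_of_subset {a b : ℕ} (ha : 0 < a) {s : Finset ℕ}
    (hs : s ⊆ Icc a b) : ∏ x ∈ s, x ≤ ∏ x ∈ Icc a b, x :=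
  prod_le_prod_of_subset_of_one_le' hs fun x hx _ => by simp only [mem_Icc] at hx; omega

theorem Nat.prod_le_two_pow_mul_prod_Icc_of_sum_le {a : ℕ} (ha : 0 < a) (s : Finset ℕ)
    (hs : ∀ x ∈ s, a ≤ x) (l : ℕ) (hsum : ∑ x ∈ s, x ≤ ∑ x ∈ Icc a (a + l), x) :
    ∏ x ∈ s, x ≤ 2 ^ l * ∏ x ∈ Icc a (a + l), x := by
  induction s using Finset.induction_on_max generalizing l with
  | empty =>
    exact Nat.mul_pos (Nat.two_pow_pos l) (prod_pos fun x hx => by simp only [mem_Icc] at hx; omega)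
  | insert t s hlt ih =>
    by_cases htop : t ≤ a + l
    · have hsub : insert t s ⊆ Icc a (a + l) := fun x hx => by
        rcases mem_insert.1 hx with rfl | hx
        · exact mem_Icc.2 ⟨hs x (mem_insert_self x s), htop⟩
        · exact mem_Icc.2 ⟨hs x (mem_insert_of_mem hx), (hlt x hx).le.trans htop⟩
      exact (Nat.prod_le_prod_Icc_of_subset ha hsub).trans
        (Nat.le_mul_of_pos_left _ (Nat.two_pow_pos l))
    have htnot : t ∉ s := fun h => (hlt t h).false
    rw [sum_insert htnot] at hsum
    rw [prod_insert htnot]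
    have hsum_lt : ∑ x ∈ s, x < ∑ x ∈ Ico a (a + l), x := by
      rw [← Ico_add_one_right_eq_Icc, sum_Ico_succ_top (by omega)] at hsum
      omega
    obtain ⟨k, hkl, hlo, hhi⟩ :=
      exists_apply_le_lt_apply_succ (g := fun j => ∑ x ∈ Ico a (a + j), x) (by simp) hsum_lt
    obtain ⟨d, rfl⟩ := Nat.exists_eq_add_of_lt hkl
    have hprod_s := ih (fun x hx => hs x (mem_insert_of_mem hx)) k
      (by rw [← Ico_add_one_right_eq_Icc]; exact hhi.le)
    have ht : t ≤ ∑ x ∈ Icc (a + k) (a + k + (d + 1)), x := by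
      have hsplit := Nat.sum_Ico_add_sum_Icc (fun x => x) (Nat.le_add_right a k)
        (show a + k ≤ a + k + (d + 1) + 1 by omega)
      rw [show a + k + (d + 1) = a + (k + d + 1) by ring] at hsplit ⊢
      omega
    calc t * ∏ x ∈ s, x
        ≤ (2 ^ (d + 1) * ∏ x ∈ Ioc (a + k) (a + k + (d + 1)), x) *
            (2 ^ k * ∏ x ∈ Icc a (a + k), x) :=
          Nat.mul_le_mul (ht.trans (Nat.sum_Icc_id_le_two_pow_mul_prod_Ioc _ _)) hprod_s
      _ = 2 ^ (k + d + 1) * ∏ x ∈ Icc a (a + (k + d + 1)), x := by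
          rw [show a + (k + d + 1) = a + k + (d + 1) by ring,
            ← Nat.prod_Icc_mul_prod_Ioc (fun x => x) (by omega : a ≤ a + k + 1)
              (Nat.le_add_right _ _)]
          ring

theorem product_bound_of_sum_bound_general
    (l : ℕ) (m : ℕ)
    (hm₂ : m ≤ ∑ j ∈ Finset.Icc 1 (l + 1), (6 + j))
    (I : ℕ) (n : Fin I → ℕ) (hmono : StrictMono n) (hge : ∀ i, 7 ≤ n i)
    (hsum : ∑ i, n i ≤ m) :
    ∏ i, n i ≤ 2 ^ l * ∏ j ∈ Finset.Icc 1 (l + 1), (6 + j) := by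
  have hshift : Icc 7 (7 + l) = (Icc 1 (l + 1)).map (addLeftEmbedding 6) := by
    rw [map_add_left_Icc]
    congr 1; omega
  have hbound := Nat.prod_le_two_pow_mul_prod_Icc_of_sum_le (a := 7) (by norm_num)
    (univ.map ⟨n, hmono.injective⟩) (by simpa using hge) l
    (by rw [hshift, sum_map, sum_map]; exact hsum.trans hm₂)
  rwa [hshift, prod_map, prod_map] at hbound

/-- With `C_l = ∑_{j=1}^l (6+j)`, any strictly increasing sequence of integers
`7 ≤ n_1 < ⋯ < n_I` with `∑ n_i ≤ m` for some `m` with `C_l < m ≤ C_{l+1}`,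
`l ≥ 1`, satisfies `∏ n_i ≤ 2^l · ∏_{j=1}^{l+1} (6+j)`. -/
theorem product_bound_of_sum_bound
    (l : ℕ) (hl : 1 ≤ l) (m : ℕ)
    (hm₁ : ∑ j ∈ Finset.Icc 1 l, (6 + j) < m)
    (hm₂ : m ≤ ∑ j ∈ Finset.Icc 1 (l + 1), (6 + j))
    (I : ℕ) (n : Fin I → ℕ) (hmono : StrictMono n) (hge : ∀ i, 7 ≤ n i)
    (hsum : ∑ i, n i ≤ m) :
    ∏ i, n i ≤ 2 ^ l * ∏ j ∈ Finset.Icc 1 (l + 1), (6 + j) :=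
  product_bound_of_sum_bound_general l m hm₂ I n hmono hge hsum
end
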